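/- Let H be a real Hilbert space, L : H × H → ℝ ∪ {+∞} an anti-selfdual Lagrangian, λ > 0, and suppose x, y ∈ H satisfy −(y,x) ∈ ∂L_λ(x,y) and that the infimum inf_{z∈H} { L(z,y) + ‖x−z‖²/(2λ) } is attained at a point z₀ = J_λ(x,y). Then −(y, z₀) ∈ ∂L(z₀, y). -/

import Mathlib

/-!
Put `ℓ = L(z₀,y)`. Attainment gives `L_λ(x,y) = ℓ + ‖x-z₀‖²/(2λ) + (λ/2)‖y‖²`, while
`L_λ(z,r) ≤ L(w,r) + ‖z-w‖²/(2λ) + (λ/2)‖r‖²` for every competitor `w`. Feeding both into the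
subgradient inequality of `L_λ` at `(x,y)`: with `w = z₀`, `r = y` it says that `x` minimizes
`z ↦ ‖z-z₀‖²/(2λ) + ⟪y,z⟫`, hence `z₀ = x + λy`; with `z = x + (w - z₀)` it gives the subgradient
inequality of `L` at `(z₀,y)` up to the error `(λ/2)‖r-y‖²`. That error is quadratic along
segments while convexity of `L` only costs a linear term, so it disappears in the limit.
-/

open scoped RealInnerProductSpace NNReal

noncomputable section

/-- Convexity for `EReal`-valued functions. -/
def ERealConvexOn {E : Type*} [AddCommGroup E] [Module ℝ E] (f : E → EReal) : Prop :=
  ∀ x y : E, ∀ s t : ℝ, 0 ≤ s → 0 ≤ t → s + t = 1 →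
    f (s • x + t • y) ≤ (s : EReal) * f x + (t : EReal) * f y

/-- The Legendre–Fenchel dual, in both variables, of a Lagrangian on `H × H`. -/
def lagrangianDualH {H : Type*} [NormedAddCommGroup H] [InnerProductSpace ℝ H]
    (L : H × H → EReal) (q y : H) : EReal :=
  ⨆ x : H, ⨆ p : H, ((⟪q, x⟫ + ⟪y, p⟫ : ℝ) : EReal) - L (x, p)

/-- A Lagrangian on a Hilbert space is anti-selfdual if `L*(p,x) = L(−x,−p)`. -/
def IsASDH {H : Type*} [NormedAddCommGroup H] [InnerProductSpace ℝ H]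
    (L : H × H → EReal) : Prop :=
  ∀ p x : H, lagrangianDualH L p x = L (-x, -p)

/-- `(q,y) ∈ ∂L(x,p)`, the subdifferential of the Lagrangian `L` at `(x,p)`. -/
def MemSubdiff {H : Type*} [NormedAddCommGroup H] [InnerProductSpace ℝ H]
    (L : H × H → EReal) (x p q y : H) : Prop :=
  ∀ z r : H, L (x, p) + ((⟪q, z - x⟫ + ⟪y, r - p⟫ : ℝ) : EReal) ≤ L (z, r)

/-- `y ∈ ∂₂L(u,v)`, the subdifferential in the second variable. -/
def MemSubdiff2 {H : Type*} [NormedAddCommGroup H] [InnerProductSpace ℝ H]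
    (L : H × H → EReal) (u v y : H) : Prop :=
  ∀ r : H, L (u, v) + ((⟪y, r - v⟫ : ℝ) : EReal) ≤ L (u, r)

/-- `q ∈ ∂₁L(x,p)`, the subdifferential in the first variable. -/
def MemSubdiff1 {H : Type*} [NormedAddCommGroup H] [InnerProductSpace ℝ H]
    (L : H × H → EReal) (x p q : H) : Prop :=
  ∀ z : H, L (x, p) + ((⟪q, z - x⟫ : ℝ) : EReal) ≤ L (z, p)

/-- The `λ`-regularization of a Lagrangian:
`L_λ(x,p) = inf_z { L(z,p) + ‖x−z‖²/(2λ) } + (λ/2)‖p‖²`. -/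
def lagReg {H : Type*} [NormedAddCommGroup H] [InnerProductSpace ℝ H]
    (lam : ℝ) (L : H × H → EReal) (x p : H) : EReal :=
  (⨅ z : H, L (z, p) + ((‖x - z‖ ^ 2 / (2 * lam) : ℝ) : EReal))
    + ((lam / 2 * ‖p‖ ^ 2 : ℝ) : EReal)

theorem EReal.add_coe_le_add_coe_of_sub_eq {a b : EReal} {A B A' B' : ℝ}
    (h : a + A ≤ b + B) (hsub : A' - B' = A - B) : a + A' ≤ b + B' :=
  calc a + A' = a + A + ((A' - A : ℝ) : EReal) := by
        rw [add_assoc, ← EReal.coe_add, add_sub_cancel]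
    _ ≤ b + B + ((A' - A : ℝ) : EReal) := by gcongr
    _ = b + B' := by
        rw [add_assoc, ← EReal.coe_add]
        congr 2
        linarith

theorem EReal.coe_le_coe_of_add_le_add {a : EReal} {A B : ℝ} (ha : a ≠ ⊤) (ha' : a ≠ ⊥)
    (h : a + A ≤ a + B) : A ≤ B := by
  rw [← EReal.coe_toReal ha ha', ← EReal.coe_add, ← EReal.coe_add, EReal.coe_le_coe_iff] at h
  linarith

theorem le_of_forall_le_add_mul {a b c : ℝ} (h : ∀ t : ℝ, 0 < t → t ≤ 1 → a ≤ b + t * c) :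
    a ≤ b := by
  have hlim : Filter.Tendsto (fun t : ℝ => b + t * c) (nhdsWithin 0 (Set.Ioi 0)) (nhds b) := by
    have := (show Continuous fun t : ℝ => b + t * c by fun_prop).tendsto 0
    simpa using this.mono_left nhdsWithin_le_nhds
  refine ge_of_tendsto hlim ?_
  filter_upwards [Ioc_mem_nhdsGT (zero_lt_one' ℝ)] with t ht using h t ht.1 ht.2

theorem ERealConvexOn.add_apply_sub_le_of_quadratic_error {E : Type*} [AddCommGroup E]
    [Module ℝ E] {F : E → EReal} (hF : ERealConvexOn F) (hbot : ∀ v, F v ≠ ⊥) {u : E}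
    (hu : F u ≠ ⊤) (g : E →ₗ[ℝ] ℝ) (Q : E → ℝ) (hQ : ∀ (t : ℝ) d, Q (t • d) = t ^ 2 * Q d)
    (h : ∀ v, F u + (g (v - u) : EReal) ≤ F v + (Q (v - u) : EReal)) (v : E) :
    F u + (g (v - u) : EReal) ≤ F v := by
  rcases eq_or_ne (F v) ⊤ with hv | hv
  · simp [hv]
  rw [← EReal.coe_toReal hu (hbot u), ← EReal.coe_toReal hv (hbot v), ← EReal.coe_add,
    EReal.coe_le_coe_iff]
  set a := (F u).toReal
  set b := (F v).toReal
  refine le_of_forall_le_add_mul (c := Q (v - u)) fun t ht ht1 => ?_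
  have hseg : u + t • (v - u) = (1 - t) • u + t • v := by
    rw [smul_sub, sub_smul, one_smul]; abel
  have hconv : F (u + t • (v - u)) ≤ (((1 - t) * a + t * b : ℝ) : EReal) := by
    rw [hseg, EReal.coe_add, EReal.coe_mul, EReal.coe_mul, EReal.coe_toReal hu (hbot u),
      EReal.coe_toReal hv (hbot v)]
    exact hF u v (1 - t) t (by linarith) ht.le (by ring)
  have key : F u + (g (t • (v - u)) : EReal)
      ≤ (((1 - t) * a + t * b : ℝ) : EReal) + (Q (t • (v - u)) : EReal) :=
    calc _ ≤ F (u + t • (v - u)) + (Q (t • (v - u)) : EReal) := by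
          simpa only [add_sub_cancel_left] using h (u + t • (v - u))
      _ ≤ _ := by gcongr
  rw [map_smul, hQ, smul_eq_mul, ← EReal.coe_toReal hu (hbot u), ← EReal.coe_add,
    ← EReal.coe_add, EReal.coe_le_coe_iff] at key
  have : t * (a + g (v - u)) ≤ t * (b + t * Q (v - u)) := by nlinarith
  linarith [le_of_mul_le_mul_left this ht]

section Hilbert

variable {H : Type*} [NormedAddCommGroup H] [InnerProductSpace ℝ H]

theorem MemSubdiff.ne_top {M : H × H → EReal} {x p q y : H} (h : MemSubdiff M x p q y)
    (hM : ∃ v, M v ≠ ⊤) : M (x, p) ≠ ⊤ := by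
  obtain ⟨⟨z, r⟩, hzr⟩ := hM
  intro htop
  have := h z r
  rw [htop, EReal.top_add_coe, top_le_iff] at this
  exact hzr this

theorem eq_add_smul_of_forall_norm_sq_add_inner_le {lam : ℝ} (hlam : 0 < lam) {x c g : H}
    (h : ∀ z, ‖x - c‖ ^ 2 / (2 * lam) + ⟪g, z - x⟫ ≤ ‖z - c‖ ^ 2 / (2 * lam)) :
    x = c + lam • g := by
  have hc := h (c + lam • g)
  rw [add_sub_cancel_left, norm_smul, Real.norm_eq_abs, mul_pow, sq_abs,
    div_add' _ _ _ (by positivity), div_le_div_iff_of_pos_right (by positivity)] at hc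
  have hexp : ‖x - (c + lam • g)‖ ^ 2 = ‖x - c‖ ^ 2 - 2 * lam * ⟪g, x - c⟫ + lam ^ 2 * ‖g‖ ^ 2 := by
    rw [← sub_sub, norm_sub_sq_real, real_inner_smul_right, norm_smul, Real.norm_eq_abs, mul_pow,
      sq_abs, real_inner_comm]
    ring
  have hinner : ⟪g, c + lam • g - x⟫ = -⟪g, x - c⟫ + lam * ‖g‖ ^ 2 := by
    rw [show c + lam • g - x = lam • g - (x - c) by abel, inner_sub_right, real_inner_smul_right,
      real_inner_self_eq_norm_sq]
    ring
  rw [hinner] at hc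
  have hzero : ‖x - (c + lam • g)‖ ^ 2 ≤ 0 := by nlinarith
  exact sub_eq_zero.mp (norm_eq_zero.mp (pow_eq_zero_iff two_ne_zero |>.mp
    (le_antisymm hzero (sq_nonneg _))))

variable (lam : ℝ) (L : H × H → EReal)

theorem lagReg_le (z r w : H) :
    lagReg lam L z r ≤ L (w, r) + ((‖z - w‖ ^ 2 / (2 * lam) + lam / 2 * ‖r‖ ^ 2 : ℝ) : EReal) := by
  rw [lagReg, EReal.coe_add, ← add_assoc]
  gcongr
  exact iInf_le _ w

variable {lam L} {x y z₀ : H}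

theorem lagReg_eq_of_forall_le
    (hmin : ∀ z : H, L (z₀, y) + ((‖x - z₀‖ ^ 2 / (2 * lam) : ℝ) : EReal)
      ≤ L (z, y) + ((‖x - z‖ ^ 2 / (2 * lam) : ℝ) : EReal)) :
    lagReg lam L x y
      = L (z₀, y) + ((‖x - z₀‖ ^ 2 / (2 * lam) + lam / 2 * ‖y‖ ^ 2 : ℝ) : EReal) := by
  refine le_antisymm (lagReg_le lam L x y z₀) ?_
  rw [lagReg, EReal.coe_add, ← add_assoc]
  gcongr
  exact le_iInf hmin

theorem add_le_of_memSubdiff_lagReg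
    (hsub : MemSubdiff (fun zp : H × H => lagReg lam L zp.1 zp.2) x y (-y) (-x))
    (hmin : ∀ z : H, L (z₀, y) + ((‖x - z₀‖ ^ 2 / (2 * lam) : ℝ) : EReal)
      ≤ L (z, y) + ((‖x - z‖ ^ 2 / (2 * lam) : ℝ) : EReal)) (z w r : H) :
    L (z₀, y) + ((‖x - z₀‖ ^ 2 / (2 * lam) + lam / 2 * ‖y‖ ^ 2
        + (⟪-y, z - x⟫ + ⟪-x, r - y⟫) : ℝ) : EReal)
      ≤ L (w, r) + ((‖z - w‖ ^ 2 / (2 * lam) + lam / 2 * ‖r‖ ^ 2 : ℝ) : EReal) :=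
  calc _ = lagReg lam L x y + ((⟪-y, z - x⟫ + ⟪-x, r - y⟫ : ℝ) : EReal) := by
        rw [lagReg_eq_of_forall_le hmin, add_assoc (L _), ← EReal.coe_add]
    _ ≤ lagReg lam L z r := hsub z r
    _ ≤ _ := lagReg_le lam L z r w

theorem ne_top_of_memSubdiff_lagReg (hproper : ∃ z, L z ≠ ⊤)
    (hsub : MemSubdiff (fun zp : H × H => lagReg lam L zp.1 zp.2) x y (-y) (-x))
    (hmin : ∀ z : H, L (z₀, y) + ((‖x - z₀‖ ^ 2 / (2 * lam) : ℝ) : EReal)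
      ≤ L (z, y) + ((‖x - z‖ ^ 2 / (2 * lam) : ℝ) : EReal)) :
    L (z₀, y) ≠ ⊤ := by
  obtain ⟨v, hv⟩ := hproper
  have hreg : lagReg lam L x y ≠ ⊤ := hsub.ne_top
    ⟨v, ne_top_of_le_ne_top (EReal.add_ne_top hv (EReal.coe_ne_top _)) (lagReg_le lam L v.1 v.2 v.1)⟩
  rw [lagReg_eq_of_forall_le hmin] at hreg
  exact fun htop => hreg (by rw [htop, EReal.top_add_coe])

theorem eq_add_smul_of_memSubdiff_lagReg (hlam : 0 < lam) (hfin : L (z₀, y) ≠ ⊤)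
    (hbot : L (z₀, y) ≠ ⊥)
    (hsub : MemSubdiff (fun zp : H × H => lagReg lam L zp.1 zp.2) x y (-y) (-x))
    (hmin : ∀ z : H, L (z₀, y) + ((‖x - z₀‖ ^ 2 / (2 * lam) : ℝ) : EReal)
      ≤ L (z, y) + ((‖x - z‖ ^ 2 / (2 * lam) : ℝ) : EReal)) :
    z₀ = x + lam • y := by
  have hx : x = z₀ + lam • -y := eq_add_smul_of_forall_norm_sq_add_inner_le hlam fun z => by
    have := EReal.coe_le_coe_of_add_le_add hfin hbot (add_le_of_memSubdiff_lagReg hsub hmin z z₀ y)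
    rw [sub_self, inner_zero_right] at this
    linarith
  rw [hx, smul_neg, neg_add_cancel_right]

theorem add_le_add_sq_of_memSubdiff_lagReg
    (hsub : MemSubdiff (fun zp : H × H => lagReg lam L zp.1 zp.2) x y (-y) (-x))
    (hmin : ∀ z : H, L (z₀, y) + ((‖x - z₀‖ ^ 2 / (2 * lam) : ℝ) : EReal)
      ≤ L (z, y) + ((‖x - z‖ ^ 2 / (2 * lam) : ℝ) : EReal))
    (hz₀ : z₀ = x + lam • y) (w r : H) :
    L (z₀, y) + ((⟪-y, w - z₀⟫ + ⟪-z₀, r - y⟫ : ℝ) : EReal)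
      ≤ L (w, r) + ((lam / 2 * ‖r - y‖ ^ 2 : ℝ) : EReal) := by
  refine EReal.add_coe_le_add_coe_of_sub_eq
    (add_le_of_memSubdiff_lagReg hsub hmin (x + (w - z₀)) w r) ?_
  rw [show x + (w - z₀) - x = w - z₀ by abel, show x + (w - z₀) - w = x - z₀ by abel, hz₀]
  simp only [inner_neg_left, inner_add_left, inner_sub_right, real_inner_smul_left,
    norm_sub_sq_real, real_inner_self_eq_norm_sq, real_inner_comm r y]
  ring

end Hilbert

theorem stmt12_general {H : Type*} [NormedAddCommGroup H] [InnerProductSpace ℝ H]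
    (L : H × H → EReal)
    (hconv : ERealConvexOn L)
    (hproper : ∃ z, L z ≠ ⊤) (hreal : ∀ z, L z ≠ ⊥)
    (lam : ℝ) (hlam : 0 < lam)
    (x y z₀ : H)
    -- `−(y,x) ∈ ∂L_λ(x,y)`
    (hsub : MemSubdiff (fun zp : H × H => lagReg lam L zp.1 zp.2) x y (-y) (-x))
    -- the infimum defining `L_λ(x,y)` is attained at `z₀`
    (hmin : ∀ z : H, L (z₀, y) + ((‖x - z₀‖ ^ 2 / (2 * lam) : ℝ) : EReal)
      ≤ L (z, y) + ((‖x - z‖ ^ 2 / (2 * lam) : ℝ) : EReal)) :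
    MemSubdiff L z₀ y (-y) (-z₀) := by
  have hfin : L (z₀, y) ≠ ⊤ := ne_top_of_memSubdiff_lagReg hproper hsub hmin
  have hz₀ : z₀ = x + lam • y := eq_add_smul_of_memSubdiff_lagReg hlam hfin (hreal _) hsub hmin
  intro w r
  exact hconv.add_apply_sub_le_of_quadratic_error hreal hfin
    ((innerₛₗ ℝ (-y)).coprod (innerₛₗ ℝ (-z₀))) (fun d => lam / 2 * ‖d.2‖ ^ 2)
    (fun t d => by simp only [Prod.smul_snd, norm_smul, mul_pow, Real.norm_eq_abs, sq_abs]; ring)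
    (fun v => add_le_add_sq_of_memSubdiff_lagReg hsub hmin hz₀ v.1 v.2) (w, r)

/-- if `−(y,x) ∈ ∂L_λ(x,y)` and the infimum defining `L_λ(x,y)` is attained at
`z₀ = J_λ(x,y)`, then `−(y,z₀) ∈ ∂L(z₀,y)`. -/
theorem stmt12 {H : Type*} [NormedAddCommGroup H] [InnerProductSpace ℝ H] [CompleteSpace H]
    (L : H × H → EReal)
    (hconv : ERealConvexOn L)
    (hlsc : LowerSemicontinuous L)
    (hproper : ∃ z, L z ≠ ⊤) (hreal : ∀ z, L z ≠ ⊥)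
    (hASD : IsASDH L)
    (lam : ℝ) (hlam : 0 < lam)
    (x y z₀ : H)
    -- `−(y,x) ∈ ∂L_λ(x,y)`
    (hsub : MemSubdiff (fun zp : H × H => lagReg lam L zp.1 zp.2) x y (-y) (-x))
    -- the infimum defining `L_λ(x,y)` is attained at `z₀`
    (hmin : ∀ z : H, L (z₀, y) + ((‖x - z₀‖ ^ 2 / (2 * lam) : ℝ) : EReal)
      ≤ L (z, y) + ((‖x - z‖ ^ 2 / (2 * lam) : ℝ) : EReal)) :
    MemSubdiff L z₀ y (-y) (-z₀) :=
  stmt12_general L hconv hproper hreal lam hlam x y z₀ hsub hmin
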